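/- arXiv:1805.01040 — 2 statements merged into one kernel-verified Lean document; each statement's English description precedes it below -/
import Mathlib

section
/- In the rooted-tree self-backhauling model with half-duplex base stations, every backhaul hop of rate R1 and access rates R_{a,u}, the max-min rate equals the reciprocal of the largest per-BS time coefficient: γ* = ( max_{i ∈ {0,…,N}} c_i )^{-1}, where c_i = Σ_{u : σ(u)=i} 1/R_{a,u} + (f(i) − w_i)/R1 + 𝟙{i ≠ 0} · f(i)/R1. In particular the supremum over all feasible scheduling matrices of the minimum end-to-end user rate is attained and equals this closed-form value. -/
open Finset
open scoped Classical

/-- A half-duplex self-backhauled cellular network on a routing tree.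
BSs are indexed by `Fin (N+1)` with `0` the fiber site (MBS); there are `U+1 ≥ 1` users.
Every backhaul link `(p i, i)` has instantaneous rate `R1` and the access link of user
`u` has instantaneous rate `Ra u`. -/
structure HDNet (N U : ℕ) where
  /-- the parent map of the routing tree (the parent of the root is the root itself,
  encoding that the parent map is really only defined on `{1,…,N}`) -/
  p : Fin (N + 1) → Fin (N + 1)
  hp0 : p 0 = 0
  /-- every BS reaches the fiber site by iterating the parent map -/
  hroot : ∀ i : Fin (N + 1), ∃ m : ℕ, p^[m] i = 0
  /-- serving BS of each user -/
  σ : Fin (U + 1) → Fin (N + 1)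
  /-- instantaneous rate of every backhaul link -/
  R1 : ℝ
  hR1 : 0 < R1
  /-- instantaneous rate of the access link of each user -/
  Ra : Fin (U + 1) → ℝ
  hRa : ∀ u, 0 < Ra u

namespace HDNet

variable {N U : ℕ}

/-- Links: the access link of each user (`inl u`), or the backhaul link `(p i, i)` for
`i ≠ 0` (`inr i`; the summand `inr 0` is a dummy which is never a hop of any route). -/
abbrev Link (N U : ℕ) := Fin (U + 1) ⊕ Fin (N + 1)

/-- BS `i` lies on the tree path from the fiber site `0` to BS `j`. -/
def onPath (net : HDNet N U) (i j : Fin (N + 1)) : Prop :=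
  ∃ m : ℕ, net.p^[m] j = i

/-- `l` is a hop on the route of user `u` (the route of `u` is the tree path from `0`
to `σ u` followed by the access link of `u`). -/
def isHop (net : HDNet N U) (l : Link N U) (u : Fin (U + 1)) : Prop :=
  match l with
  | .inl u' => u' = u
  | .inr i => i ≠ 0 ∧ net.onPath i (net.σ u)

/-- link `l` is incident to BS `j`. -/
def incident (net : HDNet N U) (l : Link N U) (j : Fin (N + 1)) : Prop :=
  match l with
  | .inl u => net.σ u = j
  | .inr i => i ≠ 0 ∧ (j = i ∨ j = net.p i)

/-- instantaneous rate of link `l`. -/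
noncomputable def rate (net : HDNet N U) : Link N U → ℝ
  | .inl u => net.Ra u
  | .inr _ => net.R1

/-- A scheduling matrix `τ` is feasible if all entries lie in `[0,1]`, an entry vanishes
unless the link is a hop on the route of the user, and every (half-duplex) BS is active
for at most `1` unit of time in total. -/
def Feasible (net : HDNet N U) (τ : Link N U → Fin (U + 1) → ℝ) : Prop :=
  (∀ l u, 0 ≤ τ l u ∧ τ l u ≤ 1) ∧
  (∀ l u, ¬ net.isHop l u → τ l u = 0) ∧
  ∀ j : Fin (N + 1),
    ∑ l : Link N U, ∑ u : Fin (U + 1), (if net.incident l j then τ l u else 0) ≤ 1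

/-- End-to-end rate of user `u`: the minimum of its long-term rates `r_l · τ l u` over
all hops `l` of its route. -/
noncomputable def e2e (net : HDNet N U) (τ : Link N U → Fin (U + 1) → ℝ)
    (u : Fin (U + 1)) : ℝ :=
  (Finset.univ.filter fun l : Link N U => net.isHop l u).inf'
    ⟨Sum.inl u, Finset.mem_filter.mpr ⟨Finset.mem_univ _, rfl⟩⟩
    fun l => net.rate l * τ l u

/-- Effective load `f i`: number of users whose route passes through BS `i`. -/
noncomputable def f (net : HDNet N U) (i : Fin (N + 1)) : ℕ :=
  (Finset.univ.filter fun u : Fin (U + 1) => net.onPath i (net.σ u)).card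

/-- Direct load `w i`: number of users served by BS `i`. -/
noncomputable def w (net : HDNet N U) (i : Fin (N + 1)) : ℕ :=
  (Finset.univ.filter fun u : Fin (U + 1) => net.σ u = i).card

/-- Per-BS time coefficient
`c i = Σ_{u : σ u = i} 1/Ra u + (f i − w i)/R1 + 𝟙{i ≠ 0} · f i / R1`. -/
noncomputable def c (net : HDNet N U) (i : Fin (N + 1)) : ℝ :=
  (∑ u : Fin (U + 1), if net.σ u = i then (net.Ra u)⁻¹ else 0)
    + ((net.f i : ℝ) - (net.w i : ℝ)) / net.R1
    + (if i ≠ 0 then (net.f i : ℝ) / net.R1 else 0)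

end HDNet

/-!
Both bounds rest on the identity `c j = ∑ u, ∑ (hops l of u incident to j), 1 / rate l`.
BS `j` meets the route of user `u` in the access link of `u` when it serves `u`, in its own
backhaul link `(p j, j)` when `j ≠ 0` lies on the route, and in exactly one more backhaul
link, towards its unique child on the route, when `u` is served strictly below `j`; summing
over users gives `w`, `f` and `f - w` in the three terms of `c j`.

A feasible schedule of minimum rate `θ` must give every hop `l` of `u` the time `θ / rate l`
at least, so BS `j` is busy for at least `θ * c j ≤ 1`. Conversely, the schedule giving every
hop exactly this time for `θ = (max c)⁻¹` keeps each BS `j` busy for `θ * c j ≤ 1`.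
-/

namespace HDNet

variable {N U : ℕ} (net : HDNet N U)

lemma iterate_p_zero (m : ℕ) : net.p^[m] 0 = 0 := Function.iterate_fixed net.hp0 m

lemma eq_zero_of_isPeriodicPt {i : Fin (N + 1)} {m : ℕ} (hm : 0 < m)
    (h : Function.IsPeriodicPt net.p m i) : i = 0 := by
  obtain ⟨k, hk⟩ := net.hroot i
  calc i = net.p^[m * k] i := (h.mul_const k).symm
    _ = net.p^[m * k - k] (net.p^[k] i) := by
        rw [← Function.iterate_add_apply, Nat.sub_add_cancel (Nat.le_mul_of_pos_left k hm)]
    _ = 0 := by rw [hk, net.iterate_p_zero]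

lemma p_ne_self {i : Fin (N + 1)} (hi : i ≠ 0) : net.p i ≠ i := fun h =>
  hi (net.eq_zero_of_isPeriodicPt one_pos h)

lemma onPath_self (s : Fin (N + 1)) : net.onPath s s := ⟨0, rfl⟩

lemma onPath_p {i s : Fin (N + 1)} (h : net.onPath i s) : net.onPath (net.p i) s := by
  obtain ⟨m, rfl⟩ := h
  exact ⟨m + 1, Function.iterate_succ_apply' _ _ _⟩

lemma onPath_total {a b s : Fin (N + 1)} (ha : net.onPath a s) (hb : net.onPath b s) :
    net.onPath a b ∨ net.onPath b a := by
  obtain ⟨ka, rfl⟩ := ha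
  obtain ⟨kb, rfl⟩ := hb
  rcases le_total ka kb with h | h
  · exact Or.inr ⟨kb - ka, by rw [← Function.iterate_add_apply, Nat.sub_add_cancel h]⟩
  · exact Or.inl ⟨ka - kb, by rw [← Function.iterate_add_apply, Nat.sub_add_cancel h]⟩

lemma exists_child_onPath {j s : Fin (N + 1)} (h : net.onPath j s) (hne : s ≠ j) :
    ∃ i, net.onPath i s ∧ net.p i = j ∧ i ≠ j := by
  obtain ⟨m, hm⟩ := h
  induction m with
  | zero => exact absurd hm hne
  | succ m ih =>
    by_cases hj : net.p^[m] s = j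
    · exact ih hj
    · exact ⟨_, ⟨m, rfl⟩, by rwa [Function.iterate_succ_apply'] at hm, hj⟩

lemma onPath_antisymm {a b : Fin (N + 1)} (hab : net.onPath a b) (hba : net.onPath b a) :
    a = b := by
  obtain ⟨m, rfl⟩ := hab
  obtain ⟨n, hn⟩ := hba
  rcases Nat.eq_zero_or_pos (n + m) with h | h
  · rw [show m = 0 by omega]; rfl
  · have hb : b = 0 := net.eq_zero_of_isPeriodicPt h (by
      rw [Function.IsPeriodicPt, Function.IsFixedPt, Function.iterate_add_apply, hn])
    rw [hb, net.iterate_p_zero]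

lemma eq_of_onPath_of_p_eq {i i' : Fin (N + 1)} (hi' : i' ≠ 0) (h : net.onPath i' i)
    (hp : net.p i = net.p i') : i = i' := by
  obtain ⟨m, hm⟩ := h
  cases m with
  | zero => exact hm
  | succ k =>
    rw [Function.iterate_succ_apply, hp] at hm
    exact absurd (net.onPath_antisymm ⟨1, rfl⟩ ⟨k, hm⟩) (net.p_ne_self hi')

lemma child_onPath_unique {i i' s : Fin (N + 1)} (hi : i ≠ 0) (hi' : i' ≠ 0)
    (hs : net.onPath i s) (hs' : net.onPath i' s) (hp : net.p i = net.p i') : i = i' :=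
  (net.onPath_total hs hs').elim (fun h => (net.eq_of_onPath_of_p_eq hi h hp.symm).symm)
    (fun h => net.eq_of_onPath_of_p_eq hi' h hp)

/-- The backhaul links `(p i, i)` on the route to BS `s` that are incident to BS `j`. -/
noncomputable def backhaulHops (j s : Fin (N + 1)) : Finset (Fin (N + 1)) :=
  {i | i ≠ 0 ∧ net.onPath i s ∧ (j = i ∨ j = net.p i)}

lemma card_children_onPath (j s : Fin (N + 1)) :
    #{i | i ≠ 0 ∧ net.onPath i s ∧ net.p i = j} = if net.onPath j s ∧ s ≠ j then 1 else 0 := by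
  split_ifs with h
  · obtain ⟨i, hi, hpi, hij⟩ := net.exists_child_onPath h.1 h.2
    have hi0 : i ≠ 0 := by
      rintro rfl
      exact hij (by rw [← hpi, net.hp0])
    rw [Finset.card_eq_one]
    refine ⟨i, Finset.eq_singleton_iff_unique_mem.2 ⟨by simp [hi0, hi, hpi], ?_⟩⟩
    simp only [Finset.mem_filter, Finset.mem_univ, true_and]
    rintro i' ⟨hi'0, hi', hpi'⟩
    exact net.child_onPath_unique hi'0 hi0 hi' hi (hpi'.trans hpi.symm)
  · refine Finset.card_eq_zero.2 (Finset.filter_eq_empty_iff.2 ?_)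
    rintro i - ⟨hi0, hi, rfl⟩
    refine h ⟨net.onPath_p hi, fun hs => net.p_ne_self hi0 ?_⟩
    exact net.onPath_antisymm ⟨1, rfl⟩ (hs ▸ hi)

lemma card_backhaulHops (j s : Fin (N + 1)) :
    #(net.backhaulHops j s) =
      (if j ≠ 0 ∧ net.onPath j s then 1 else 0) + (if net.onPath j s ∧ s ≠ j then 1 else 0) := by
  have hsplit : net.backhaulHops j s = ({i | i ≠ 0 ∧ net.onPath i s ∧ i = j} : Finset _) ∪
      ({i | i ≠ 0 ∧ net.onPath i s ∧ net.p i = j} : Finset _) := by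
    ext i
    grind [backhaulHops]
  have hdisj : Disjoint ({i | i ≠ 0 ∧ net.onPath i s ∧ i = j} : Finset _)
      ({i | i ≠ 0 ∧ net.onPath i s ∧ net.p i = j} : Finset _) := by
    simp only [Finset.disjoint_filter]
    rintro i - ⟨hi0, -, rfl⟩ ⟨-, -, hpi⟩
    exact net.p_ne_self hi0 hpi
  rw [hsplit, Finset.card_union_of_disjoint hdisj, card_children_onPath]
  congr 1
  split_ifs with h
  · exact Finset.card_eq_one.2 ⟨j, by ext i; grind⟩
  · exact Finset.card_eq_zero.2 (Finset.filter_eq_empty_iff.2 fun i _ hi => h (by grind))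

/-- The time BS `j` must be active per unit of end-to-end rate delivered to user `u`. -/
noncomputable def hopCost (j : Fin (N + 1)) (u : Fin (U + 1)) : ℝ :=
  ∑ l, if net.incident l j ∧ net.isHop l u then (net.rate l)⁻¹ else 0

lemma hopCost_eq (j : Fin (N + 1)) (u : Fin (U + 1)) :
    net.hopCost j u =
      (if net.σ u = j then (net.Ra u)⁻¹ else 0) + #(net.backhaulHops j (net.σ u)) / net.R1 := by
  simp only [hopCost, Fintype.sum_sum_type]
  congr 1
  · simp [incident, isHop, rate, and_comm, ite_and]
  · calc (∑ i, if net.incident (.inr i) j ∧ net.isHop (.inr i) u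
            then (net.rate (.inr i))⁻¹ else 0)
        = ∑ _i ∈ net.backhaulHops j (net.σ u), net.R1⁻¹ := by
          rw [backhaulHops, Finset.sum_filter]
          refine Finset.sum_congr rfl fun i _ => if_congr ?_ rfl rfl
          simp only [incident, isHop]
          tauto
      _ = _ := by rw [Finset.sum_const, nsmul_eq_mul, div_eq_mul_inv]

lemma sum_hopCost (j : Fin (N + 1)) : ∑ u, net.hopCost j u = net.c j := by
  have hf : (net.f j : ℝ) = ∑ u, if net.onPath j (net.σ u) then 1 else 0 := by
    rw [Finset.sum_boole]; rfl
  have hw : (net.w j : ℝ) = ∑ u, if net.σ u = j then 1 else 0 := by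
    rw [Finset.sum_boole]; rfl
  have hstrict : ∀ u, (if net.onPath j (net.σ u) ∧ net.σ u ≠ j then 1 else 0 : ℝ) =
      (if net.onPath j (net.σ u) then 1 else 0) - if net.σ u = j then 1 else 0 := by
    intro u
    by_cases hu : net.σ u = j
    · simp [hu, net.onPath_self]
    · simp [hu]
  have hparentLink : (∑ u, if j ≠ 0 ∧ net.onPath j (net.σ u) then 1 else 0 : ℝ) =
      if j ≠ 0 then (net.f j : ℝ) else 0 := by
    by_cases hj : j = 0 <;> simp [hj, hf]
  simp only [hopCost_eq, card_backhaulHops, Nat.cast_add, Nat.cast_ite, Nat.cast_one,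
    Nat.cast_zero, Finset.sum_add_distrib, ← Finset.sum_div, hstrict, Finset.sum_sub_distrib,
    hparentLink, ← hf, ← hw]
  unfold c
  split_ifs <;> ring

lemma rate_pos (l : Link N U) : 0 < net.rate l := by
  cases l with
  | inl u => exact net.hRa u
  | inr _ => exact net.hR1

lemma exists_incident_of_isHop {l : Link N U} {u : Fin (U + 1)} (h : net.isHop l u) :
    ∃ j, net.incident l j := by
  cases l with
  | inl u' => exact ⟨net.σ u', rfl⟩
  | inr i => exact ⟨i, h.1, Or.inl rfl⟩

lemma inv_rate_le_c {l : Link N U} {j : Fin (N + 1)} {u : Fin (U + 1)}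
    (hinc : net.incident l j) (hhop : net.isHop l u) : (net.rate l)⁻¹ ≤ net.c j := by
  have hnonneg : ∀ (u : Fin (U + 1)) (l : Link N U),
      0 ≤ if net.incident l j ∧ net.isHop l u then (net.rate l)⁻¹ else 0 := fun u l => by
    split_ifs
    exacts [inv_nonneg.2 (net.rate_pos l).le, le_rfl]
  rw [← sum_hopCost]
  calc (net.rate l)⁻¹ = if net.incident l j ∧ net.isHop l u then (net.rate l)⁻¹ else 0 :=
        (if_pos ⟨hinc, hhop⟩).symm
    _ ≤ net.hopCost j u := Finset.single_le_sum (fun l _ => hnonneg u l) (Finset.mem_univ l)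
    _ ≤ ∑ u, net.hopCost j u :=
        Finset.single_le_sum (fun u _ => Finset.sum_nonneg fun l _ => hnonneg u l)
          (Finset.mem_univ u)

lemma c_σ_pos (u : Fin (U + 1)) : 0 < net.c (net.σ u) :=
  (inv_pos.2 (net.rate_pos (.inl u))).trans_le (net.inv_rate_le_c (l := .inl u) rfl rfl)

noncomputable def busyTime (τ : Link N U → Fin (U + 1) → ℝ) (j : Fin (N + 1)) : ℝ :=
  ∑ l, ∑ u, if net.incident l j then τ l u else 0

lemma e2e_le_rate_mul {τ : Link N U → Fin (U + 1) → ℝ} {l : Link N U} {u : Fin (U + 1)}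
    (h : net.isHop l u) : net.e2e τ u ≤ net.rate l * τ l u :=
  Finset.inf'_le _ (Finset.mem_filter.2 ⟨Finset.mem_univ l, h⟩)

lemma mul_c_le_busyTime {τ : Link N U → Fin (U + 1) → ℝ} (hτ : ∀ l u, 0 ≤ τ l u) {θ : ℝ}
    (hθ : ∀ u, θ ≤ net.e2e τ u) (j : Fin (N + 1)) : θ * net.c j ≤ net.busyTime τ j := by
  rw [← sum_hopCost, Finset.mul_sum, busyTime, Finset.sum_comm]
  refine Finset.sum_le_sum fun u _ => ?_
  rw [hopCost, Finset.mul_sum]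
  refine Finset.sum_le_sum fun l _ => ?_
  by_cases hinc : net.incident l j
  · by_cases hhop : net.isHop l u
    · rw [if_pos ⟨hinc, hhop⟩, if_pos hinc, mul_inv_le_iff₀' (net.rate_pos l)]
      exact (hθ u).trans (net.e2e_le_rate_mul hhop)
    · rw [if_neg fun h => hhop h.2, if_pos hinc, mul_zero]
      exact hτ l u
  · rw [if_neg fun h => hinc h.1, if_neg hinc, mul_zero]

lemma le_inv_c_of_feasible {τ : Link N U → Fin (U + 1) → ℝ} (hτ : net.Feasible τ)
    (j : Fin (N + 1)) (hj : 0 < net.c j) :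
    Finset.univ.inf' Finset.univ_nonempty (net.e2e τ) ≤ (net.c j)⁻¹ := by
  rw [← one_div, le_div_iff₀ hj]
  exact (net.mul_c_le_busyTime (fun l u => (hτ.1 l u).1)
    (fun u => Finset.inf'_le _ (Finset.mem_univ u)) j).trans (hτ.2.2 j)

noncomputable def equalRateSchedule (γ : ℝ) (l : Link N U) (u : Fin (U + 1)) : ℝ :=
  if net.isHop l u then γ * (net.rate l)⁻¹ else 0

lemma e2e_equalRateSchedule (γ : ℝ) (u : Fin (U + 1)) :
    net.e2e (net.equalRateSchedule γ) u = γ := by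
  refine (Finset.inf'_congr _ rfl fun l hl => ?_).trans (Finset.inf'_const _ γ)
  rw [equalRateSchedule, if_pos (Finset.mem_filter.1 hl).2, mul_comm γ,
    mul_inv_cancel_left₀ (net.rate_pos l).ne']

lemma busyTime_equalRateSchedule (γ : ℝ) (j : Fin (N + 1)) :
    net.busyTime (net.equalRateSchedule γ) j = γ * net.c j := by
  rw [← sum_hopCost, Finset.mul_sum, busyTime, Finset.sum_comm]
  refine Finset.sum_congr rfl fun u _ => ?_
  rw [hopCost, Finset.mul_sum]
  refine Finset.sum_congr rfl fun l _ => ?_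
  rw [equalRateSchedule, ite_and]
  split_ifs <;> simp

lemma feasible_equalRateSchedule {γ : ℝ} (hγ : 0 ≤ γ) (hc : ∀ j, γ * net.c j ≤ 1) :
    net.Feasible (net.equalRateSchedule γ) := by
  refine ⟨fun l u => ?_, fun l u h => if_neg h, fun j => ?_⟩
  · unfold equalRateSchedule
    split_ifs with hhop
    · obtain ⟨j, hinc⟩ := net.exists_incident_of_isHop hhop
      refine ⟨mul_nonneg hγ (inv_nonneg.2 (net.rate_pos l).le), ?_⟩
      exact (mul_le_mul_of_nonneg_left (net.inv_rate_le_c hinc hhop) hγ).trans (hc j)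
    · exact ⟨le_rfl, zero_le_one⟩
  · exact (net.busyTime_equalRateSchedule γ j).le.trans (hc j)

end HDNet

/-- **Max-min rate, half-duplex IAB (Theorem 1).** Given a nearest-neighbour routing
tree in which every BS has a unique parent, the supremum over feasible scheduling
matrices of the minimum end-to-end user rate is attained, and equals
`γ* = (max_{i} c_i)⁻¹`. -/
theorem maxmin_halfduplex_IAB (N U : ℕ) (net : HDNet N U) :
    IsGreatest
      {θ : ℝ | ∃ τ : HDNet.Link N U → Fin (U + 1) → ℝ,
          net.Feasible τ ∧ θ = Finset.univ.inf' Finset.univ_nonempty (net.e2e τ)}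
      ((Finset.univ.sup' Finset.univ_nonempty net.c)⁻¹) := by
  set C := Finset.univ.sup' Finset.univ_nonempty net.c
  have hcC : ∀ j, net.c j ≤ C := fun j => Finset.le_sup' net.c (Finset.mem_univ j)
  have hC : 0 < C := (net.c_σ_pos 0).trans_le (hcC _)
  refine ⟨⟨net.equalRateSchedule C⁻¹, ?_, ?_⟩, ?_⟩
  · refine net.feasible_equalRateSchedule (inv_nonneg.2 hC.le) fun j => ?_
    calc C⁻¹ * net.c j ≤ C⁻¹ * C := by gcongr; exact hcC j
      _ = 1 := inv_mul_cancel₀ hC.ne'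
  · simp only [net.e2e_equalRateSchedule, Finset.inf'_const]
  · rintro θ ⟨τ, hτ, rfl⟩
    obtain ⟨j, -, hj⟩ := Finset.exists_mem_eq_sup' Finset.univ_nonempty net.c
    rw [show C = net.c j from hj] at hC ⊢
    exact net.le_inv_c_of_feasible hτ j hC
end

section
/- In the k-ring deployment with half-duplex BSs, equal access rate Ra to all users, and loads satisfying w_{0,0} ≥ w_{i,j} and w_{i,j} = w_{−i,−j} for all (i,j), nearest-neighbour highway routing is optimal in terms of max-min rate, and the globally optimal max-min rate is R*_{e2e} = ( w_{0,0}/Ra + (U − w_{0,0})/R1 )^{-1}, where U = Σ_{(i,j)} w_{i,j} is the total number of users. Moreover, even when the load conditions w_{0,0} ≥ w_{i,j} and w_{i,j} = w_{−i,−j} do not hold, the quantity ( w_{0,0}/Ra + (U − w_{0,0})/R1 )^{-1} is still an upper bound on the max-min rate for every routing strategy. -/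
open Finset
open scoped Classical

/-! `k`-ring deployment: BSs at integer grid points `(i,j)` with `|i|+|j| ≤ k`;
the BS at the origin is the fiber site (MBS), all others are relays. -/

/-- Base stations of the `k`-ring deployment. -/
def KBS (k : ℕ) := {q : ℤ × ℤ // q.1.natAbs + q.2.natAbs ≤ k}

instance (k : ℕ) : DecidableEq (KBS k) := Subtype.instDecidableEq

noncomputable instance (k : ℕ) : Fintype (KBS k) := by
  have h : {q : ℤ × ℤ | q.1.natAbs + q.2.natAbs ≤ k}.Finite := by
    apply Set.Finite.subset (Set.finite_Icc ((-(k : ℤ), -(k : ℤ))) ((k : ℤ), (k : ℤ)))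
    rintro ⟨x, y⟩ hxy
    simp only [Set.mem_setOf_eq] at hxy
    simp only [Set.mem_Icc, Prod.mk_le_mk]
    omega
  exact h.fintype

/-- the fiber site `(0,0)`. -/
def KBS.origin (k : ℕ) : KBS k := ⟨(0, 0), by simp⟩

/-- the antipodal BS `(-i,-j)` of `(i,j)`. -/
def KBS.neg {k : ℕ} (b : KBS k) : KBS k := ⟨(-b.1.1, -b.1.2), by simpa using b.2⟩

/-- two distinct BSs lie on a common (axis-parallel) street. -/
def street {k : ℕ} (a b : KBS k) : Prop :=
  a ≠ b ∧ (a.1.1 = b.1.1 ∨ a.1.2 = b.1.2)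

/-- number of grid steps spanned by a hop from `a` to `b`. -/
def gdist {k : ℕ} (a b : KBS k) : ℕ :=
  (a.1.1 - b.1.1).natAbs + (a.1.2 - b.1.2).natAbs

/-- Users: BS `b` serves `w b` users. -/
def Users (k : ℕ) (w : KBS k → ℕ) := Σ b : KBS k, Fin (w b)

noncomputable instance (k : ℕ) (w : KBS k → ℕ) : Fintype (Users k w) := by
  unfold Users; infer_instance

/-- A routing strategy: each user gets a static route, namely a path of pairwise
distinct BSs from the fiber site to its serving BS along street links (followed by the
user's access link). -/
structure Routing (k : ℕ) (w : KBS k → ℕ) where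
  route : Users k w → List (KBS k)
  nodup : ∀ u, (route u).Nodup
  head : ∀ u, (route u).head? = some (KBS.origin k)
  last : ∀ u, (route u).getLast? = some u.1
  chain : ∀ u, (route u).Chain' street

/-- Links: access link of each user (`inl u`), or a backhaul link between an ordered
pair of BSs (`inr (a, b)`). -/
abbrev KLink (k : ℕ) (w : KBS k → ℕ) := Users k w ⊕ (KBS k × KBS k)

/-- `l` is a hop on the route of user `u`. -/
def isHop {k : ℕ} {w : KBS k → ℕ} (ρ : Routing k w) (l : KLink k w)
    (u : Users k w) : Prop :=
  match l with
  | .inl u' => u' = u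
  | .inr q => q ∈ (ρ.route u).zip (ρ.route u).tail

/-- link `l` is incident to BS `j`. -/
def incident {k : ℕ} {w : KBS k → ℕ} (l : KLink k w) (j : KBS k) : Prop :=
  match l with
  | .inl u => u.1 = j
  | .inr q => j = q.1 ∨ j = q.2

/-- instantaneous link rates: `Ra` on access links, `R q` on a backhaul hop spanning
`q` grid steps. -/
noncomputable def linkRate {k : ℕ} {w : KBS k → ℕ} (R : ℕ → ℝ) (Ra : ℝ) :
    KLink k w → ℝ
  | .inl _ => Ra
  | .inr q => R (gdist q.1 q.2)

/-- Feasible scheduling matrix: entries in `[0,1]`, zero unless the link is a hop on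
the route of the user, and each (half-duplex) BS active at most `1` unit of time. -/
def Feasible {k : ℕ} {w : KBS k → ℕ} (ρ : Routing k w)
    (τ : KLink k w → Users k w → ℝ) : Prop :=
  (∀ l u, 0 ≤ τ l u ∧ τ l u ≤ 1) ∧
  (∀ l u, ¬ isHop ρ l u → τ l u = 0) ∧
  ∀ j : KBS k, ∑ l : KLink k w, ∑ u : Users k w,
      (if incident l j then τ l u else 0) ≤ 1

/-- end-to-end rate of user `u`: minimum long-term rate over the hops of its route. -/
noncomputable def e2e {k : ℕ} {w : KBS k → ℕ} (R : ℕ → ℝ) (Ra : ℝ) (ρ : Routing k w)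
    (τ : KLink k w → Users k w → ℝ) (u : Users k w) : ℝ :=
  (Finset.univ.filter fun l : KLink k w => isHop ρ l u).inf'
    ⟨Sum.inl u, Finset.mem_filter.mpr ⟨Finset.mem_univ _, rfl⟩⟩
    fun l => linkRate R Ra l * τ l u

/-- The max-min rate of a routing strategy: the supremum over feasible scheduling
matrices of the minimum end-to-end user rate. -/
noncomputable def maxmin {k : ℕ} {w : KBS k → ℕ} (R : ℕ → ℝ) (Ra : ℝ)
    (hw : 0 < w (KBS.origin k)) (ρ : Routing k w) : ℝ :=
  sSup {θ : ℝ | ∃ τ : KLink k w → Users k w → ℝ, Feasible ρ τ ∧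
    θ = Finset.univ.inf' ⟨⟨KBS.origin k, ⟨0, hw⟩⟩, Finset.mem_univ _⟩ (e2e R Ra ρ τ)}

/-- effective load of BS `b` under routing `ρ`. -/
noncomputable def load {k : ℕ} {w : KBS k → ℕ} (ρ : Routing k w) (b : KBS k) : ℕ :=
  (Finset.univ.filter fun u : Users k w => b ∈ ρ.route u).card

/-- the highway route from the origin to `(i,j)` through `(i,0)`:
`(0,0), (±1,0), …, (i,0), (i,±1), …, (i,j)` (all unit hops). -/
def hwX (i j : ℤ) : List (ℤ × ℤ) :=
  ((List.range (i.natAbs + 1)).map fun t => ((i.sign * (t : ℤ), (0 : ℤ)) : ℤ × ℤ)) ++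
    ((List.range j.natAbs).map fun t => ((i, j.sign * ((t : ℤ) + 1)) : ℤ × ℤ))

/-- the highway route from the origin to `(i,j)` through `(0,j)`. -/
def hwY (i j : ℤ) : List (ℤ × ℤ) :=
  ((List.range (j.natAbs + 1)).map fun t => (((0 : ℤ), j.sign * (t : ℤ)) : ℤ × ℤ)) ++
    ((List.range i.natAbs).map fun t => ((i.sign * ((t : ℤ) + 1), j) : ℤ × ℤ))

/-- Nearest-neighbour highway routing (NNHR): every user served at `(i,j)` is routed
along unit hops to the Manhattan-farther of `(i,0)`/`(0,j)` first and then to `(i,j)`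
(either way in case of a tie), users at the same BS share the same route, and the
tie-breaking is symmetric, i.e. the effective loads satisfy `f(i,j) = f(-i,-j)`. -/
def IsNNHR {k : ℕ} {w : KBS k → ℕ} (ρ : Routing k w) : Prop :=
  (∀ u : Users k w,
    ((ρ.route u).map (fun b => b.1) = hwX u.1.1.1 u.1.1.2 ∨
      (ρ.route u).map (fun b => b.1) = hwY u.1.1.1 u.1.1.2) ∧
    (u.1.1.2.natAbs < u.1.1.1.natAbs →
      (ρ.route u).map (fun b => b.1) = hwX u.1.1.1 u.1.1.2) ∧
    (u.1.1.1.natAbs < u.1.1.2.natAbs →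
      (ρ.route u).map (fun b => b.1) = hwY u.1.1.1 u.1.1.2)) ∧
  (∀ (b : KBS k) (m m' : Fin (w b)), ρ.route ⟨b, m⟩ = ρ.route ⟨b, m'⟩) ∧
  (∀ b : KBS k, load ρ b = load ρ (KBS.neg b))


/-! ### Auxiliary lemmas -/

section ListAux

variable {α : Type*}

theorem nr_zip_tail_rel {r : α → α → Prop} :
    ∀ {l : List α}, l.Chain' r → ∀ {a b : α}, (a, b) ∈ l.zip l.tail → r a b
  | [], _, _, _, h => by simp at h
  | [x], _, _, _, h => by simp at h
  | x :: y :: s, hc, a, b, h => by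
    rw [List.Chain', List.isChain_cons_cons] at hc
    simp only [List.tail_cons, List.zip_cons_cons, List.mem_cons] at h
    rcases h with h | h
    · cases h; exact hc.1
    · exact nr_zip_tail_rel hc.2 h

theorem nr_zip_tail_fst_mem {l : List α} {a b : α}
    (h : (a, b) ∈ l.zip l.tail) : a ∈ l :=
  (List.of_mem_zip h).1

theorem nr_zip_tail_nodup : ∀ {l : List α}, l.Nodup → (l.zip l.tail).Nodup
  | [], _ => by simp
  | [x], _ => by simp
  | x :: y :: s, hn => by
    have hx : x ∉ y :: s := (List.nodup_cons.1 hn).1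
    have hn' := (List.nodup_cons.1 hn).2
    simp only [List.tail_cons, List.zip_cons_cons, List.nodup_cons]
    exact ⟨fun hmem => hx (nr_zip_tail_fst_mem hmem), nr_zip_tail_nodup hn'⟩

theorem nr_deg_count [DecidableEq α] (j : α) :
    ∀ (l : List α), l.Nodup →
      ((l.zip l.tail).countP fun q => j = q.1 ∨ j = q.2)
        = (if j ∈ l.dropLast then 1 else 0) + (if j ∈ l.tail then 1 else 0)
  | [], _ => by simp
  | [x], _ => by simp
  | x :: y :: s, hn => by
    have hn' : (y :: s).Nodup := hn.of_cons
    have IH := nr_deg_count j (y :: s) hn'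
    simp only [List.tail_cons, List.zip_cons_cons, List.countP_cons] at IH ⊢
    have hdl : (x :: y :: s).dropLast = x :: (y :: s).dropLast := by
      simp [List.dropLast]
    rw [hdl, IH]
    by_cases hx : j = x
    · subst hx
      have hjys : j ∉ y :: s := by
        simpa using (List.nodup_cons.1 hn).1
      have h1 : j ∉ (y :: s).dropLast := fun h => hjys (List.dropLast_subset _ h)
      have h2 : j ∉ s := fun h => hjys (List.mem_cons_of_mem _ h)
      have h3 : j ≠ y := fun h => hjys (h ▸ List.mem_cons_self)
      simp [h1, h2, h3, List.mem_cons]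
    · have hys : j ∈ (y :: s).tail ↔ j ∈ s := by simp
      by_cases hy : j = y
      · subst hy
        have : j ∉ s := by
          have := (List.nodup_cons.1 hn').1; simpa using this
        simp [hx, this]
      · simp [hx, hy, List.mem_cons, decide_eq_true_eq]
        congr

theorem nr_mem_of_getLast? {l : List α} {a : α} (h : l.getLast? = some a) : a ∈ l := by
  obtain ⟨h2, rfl⟩ := List.mem_getLast?_eq_getLast (show a ∈ l.getLast? by simp [h])
  exact List.getLast_mem _

theorem nr_mem_of_head? {l : List α} {a : α} (h : l.head? = some a) : a ∈ l :=
  List.mem_of_mem_head? (by simp [h])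

theorem nr_list_eq_singleton {r : List α} {h : α} (hn : r.Nodup)
    (hh : r.head? = some h) (hl : r.getLast? = some h) : r = [h] := by
  cases r with
  | nil => simp at hh
  | cons a s =>
    rw [List.head?_cons, Option.some_inj] at hh
    subst hh
    cases s with
    | nil => rfl
    | cons b t =>
      exfalso
      rw [List.getLast?_cons_cons] at hl
      have hmem : a ∈ b :: t := nr_mem_of_getLast? hl
      exact (List.nodup_cons.1 hn).1 hmem

end ListAux

section HwAux

theorem nr_sign_cases (i : ℤ) :
    (i.sign = 0 ∧ i = 0) ∨ (i.sign = 1 ∧ 0 < i) ∨ (i.sign = -1 ∧ i < 0) := by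
  rcases lt_trichotomy i 0 with h | h | h
  · exact Or.inr (Or.inr ⟨Int.sign_eq_neg_one_of_neg h, h⟩)
  · exact Or.inl ⟨by simp [h], h⟩
  · exact Or.inr (Or.inl ⟨Int.sign_eq_one_of_pos h, h⟩)

/-- normalized form of `hwX` (mapping over `ℕ`-ranges). -/
def hwXn (i j : ℤ) : List (ℤ × ℤ) :=
  ((List.range (i.natAbs + 1)).map fun t : ℕ => ((i.sign * (t : ℤ), (0 : ℤ)) : ℤ × ℤ)) ++
    ((List.range j.natAbs).map fun t : ℕ => ((i, j.sign * ((t : ℤ) + 1)) : ℤ × ℤ))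

theorem hwX_eq (i j : ℤ) : hwX i j = hwXn i j := by
  unfold hwX hwXn
  rw [bind_pure_comp, bind_pure_comp]
  simp only [List.map_eq_map, List.map_map]
  rfl

theorem hwY_eq_swap (i j : ℤ) : hwY i j = (hwXn j i).map Prod.swap := by
  unfold hwY hwXn
  rw [bind_pure_comp, bind_pure_comp]
  simp only [List.map_eq_map, List.map_map, List.map_append]
  rfl

theorem nr_mem_hwXn {i j : ℤ} {p : ℤ × ℤ} :
    p ∈ hwXn i j ↔ ((∃ t : ℕ, t ≤ i.natAbs ∧ ((i.sign * t, 0) : ℤ × ℤ) = p) ∨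
      (∃ t : ℕ, t < j.natAbs ∧ ((i, j.sign * (t + 1)) : ℤ × ℤ) = p)) := by
  unfold hwXn
  rw [List.mem_append]
  constructor
  · rintro (h | h)
    · obtain ⟨t, ht, hp⟩ := List.mem_map.1 h
      exact Or.inl ⟨t, Nat.lt_succ_iff.1 (List.mem_range.1 ht), hp⟩
    · obtain ⟨t, ht, hp⟩ := List.mem_map.1 h
      exact Or.inr ⟨t, List.mem_range.1 ht, hp⟩
  · rintro (⟨t, ht, hp⟩ | ⟨t, ht, hp⟩)
    · exact Or.inl (List.mem_map.2 ⟨t, List.mem_range.2 (Nat.lt_succ_iff.2 ht), hp⟩)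
    · exact Or.inr (List.mem_map.2 ⟨t, List.mem_range.2 ht, hp⟩)

theorem nr_hwXn_antipodal {i j : ℤ} {p : ℤ × ℤ} (h1 : p ∈ hwXn i j)
    (h2 : ((-p.1, -p.2) : ℤ × ℤ) ∈ hwXn i j) : p = ((0 : ℤ), (0 : ℤ)) := by
  rw [nr_mem_hwXn] at h1 h2
  have hgoal : p.1 = 0 ∧ p.2 = 0 := by
    rcases h1 with ⟨t, ht, hp⟩ | ⟨t, ht, hp⟩ <;> rcases h2 with ⟨t', ht', hq⟩ | ⟨t', ht', hq⟩ <;>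
        rw [Prod.ext_iff] at hp hq <;> obtain ⟨hp1, hp2⟩ := hp <;> obtain ⟨hq1, hq2⟩ := hq <;>
        simp only [] at hp1 hp2 hq1 hq2
    · have hz : i.sign * ((t : ℤ) + (t' : ℤ)) = 0 := by rw [mul_add]; omega
      rcases mul_eq_zero.1 hz with hs | hts
      · rw [Int.sign_eq_zero_iff_zero] at hs
        have : i.sign = 0 := by rw [hs]; rfl
        rw [this, zero_mul] at hp1
        exact ⟨hp1.symm, hp2.symm⟩
      · have h0 : (t : ℤ) = 0 := by omega
        rw [h0, mul_zero] at hp1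
        exact ⟨hp1.symm, hp2.symm⟩
    · exfalso
      have hz : j.sign * ((t' : ℤ) + 1) = 0 := by omega
      rcases mul_eq_zero.1 hz with hs | hts
      · rw [Int.sign_eq_zero_iff_zero] at hs
        omega
      · omega
    · exfalso
      have hz : j.sign * ((t : ℤ) + 1) = 0 := by omega
      rcases mul_eq_zero.1 hz with hs | hts
      · rw [Int.sign_eq_zero_iff_zero] at hs
        omega
      · omega
    · exfalso
      have hi0 : i = 0 := by omega
      have hz : j.sign * (((t : ℤ) + 1) + ((t' : ℤ) + 1)) = 0 := by rw [mul_add]; omega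
      rcases mul_eq_zero.1 hz with hs | hts
      · rw [Int.sign_eq_zero_iff_zero] at hs
        omega
      · omega
  exact Prod.ext hgoal.1 hgoal.2

theorem nr_hwXn_head (i j : ℤ) : (hwXn i j).head? = some ((0 : ℤ), (0 : ℤ)) := by
  unfold hwXn
  rw [List.head?_append]
  have : (List.range (i.natAbs + 1)) = 0 :: (List.range i.natAbs).map Nat.succ :=
    List.range_succ_eq_map
  rw [this]
  simp

theorem nr_hwXn_getLast (i j : ℤ) : (hwXn i j).getLast? = some ((i, j) : ℤ × ℤ) := by
  unfold hwXn
  by_cases hj : j = 0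
  · subst hj
    simp only [Int.natAbs_zero, List.range_zero, List.map_nil, List.append_nil]
    rw [List.range_succ, List.map_append]
    simp only [List.map_cons, List.map_nil]
    rw [List.getLast?_concat, Int.sign_mul_natAbs]
  · have hn : 0 < j.natAbs := Int.natAbs_pos.2 hj
    obtain ⟨m, hm⟩ : ∃ m, j.natAbs = m + 1 := ⟨j.natAbs - 1, by omega⟩
    rw [List.getLast?_append_of_ne_nil]
    swap
    · rw [hm]
      simp [List.range_succ]
    rw [hm, List.range_succ, List.map_append]
    simp only [List.map_cons, List.map_nil]
    rw [List.getLast?_concat]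
    have : j.sign * ((m : ℤ) + 1) = j := by
      have := Int.sign_mul_natAbs j
      rw [hm] at this
      push_cast at this
      linarith
    rw [this]

theorem nr_hwXn_nodup (i j : ℤ) : (hwXn i j).Nodup := by
  unfold hwXn
  rw [List.nodup_append]
  refine ⟨?_, ?_, ?_⟩
  · apply List.Nodup.map_on ?_ List.nodup_range
    intro t ht t' ht' h
    rw [List.mem_range] at ht ht'
    rw [Prod.ext_iff] at h
    rcases nr_sign_cases i with ⟨hs, hi⟩ | ⟨hs, hi⟩ | ⟨hs, hi⟩
    · have : i.natAbs = 0 := by rw [hi]; rfl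
      omega
    · rw [hs] at h; simp at h; omega
    · rw [hs] at h; simp at h; omega
  · apply List.Nodup.map_on ?_ List.nodup_range
    intro t ht t' ht' h
    rw [List.mem_range] at ht ht'
    rw [Prod.ext_iff] at h
    have hj : j ≠ 0 := by intro h0; rw [h0] at ht; simp at ht
    rcases nr_sign_cases j with ⟨hs, h0⟩ | ⟨hs, h0⟩ | ⟨hs, h0⟩
    · exact absurd h0 hj
    · rw [hs] at h; simp at h; omega
    · rw [hs] at h; simp at h; omega
  · intro a ha b hb hab
    subst hab
    obtain ⟨t, ht, rfl⟩ := List.mem_map.1 ha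
    obtain ⟨t', ht', h⟩ := List.mem_map.1 hb
    rw [List.mem_range] at ht'
    have hj : j ≠ 0 := by intro h0; rw [h0] at ht'; simp at ht'
    rw [Prod.ext_iff] at h
    have h2 := h.2
    simp only [] at h2
    rcases nr_sign_cases j with ⟨hs, h0⟩ | ⟨hs, h0⟩ | ⟨hs, h0⟩
    · exact absurd h0 hj
    · rw [hs] at h2; simp at h2; omega
    · rw [hs] at h2; simp at h2; omega

/-- all hops of `hwXn` are unit grid steps. -/
theorem nr_hwXn_chain (i j : ℤ) :
    (hwXn i j).Chain' (fun p q => (p.1 - q.1).natAbs + (p.2 - q.2).natAbs = 1) := by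
  unfold hwXn
  rw [List.Chain', List.isChain_append]
  refine ⟨?_, ?_, ?_⟩
  · rw [List.isChain_map]
    cases h : i.natAbs + 1 with
    | zero => simp [h]
    | succ m =>
      rw [List.isChain_range_succ]
      intro t ht
      have hi : i ≠ 0 := by
        intro h0
        rw [h0] at h
        simp at h
        omega
      simp only []
      rcases nr_sign_cases i with ⟨hs, h0⟩ | ⟨hs, h0⟩ | ⟨hs, h0⟩
      · exact absurd h0 hi
      · rw [hs]; push_cast; simp
      · rw [hs]; push_cast; simp
  · rw [List.isChain_map]
    cases h : j.natAbs with
    | zero => simp [h]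
    | succ m =>
      rw [List.isChain_range_succ]
      intro t ht
      have hj : j ≠ 0 := by intro h0; rw [h0] at h; simp at h
      simp only []
      rcases nr_sign_cases j with ⟨hs, h0⟩ | ⟨hs, h0⟩ | ⟨hs, h0⟩
      · exact absurd h0 hj
      · rw [hs]; push_cast; simp
      · rw [hs]; push_cast; simp
  · intro x hx y hy
    rw [List.range_succ, List.map_append] at hx
    simp only [List.map_cons, List.map_nil] at hx
    rw [List.getLast?_concat] at hx
    cases h : j.natAbs with
    | zero =>
      rw [h] at hy
      simp at hy
    | succ m =>
      have hj : j ≠ 0 := by intro h0; rw [h0] at h; simp at h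
      rw [h] at hy
      rw [List.range_succ_eq_map] at hy
      simp only [List.map_cons, List.head?_cons, Option.mem_def, Option.some.injEq] at hy hx
      subst hx
      subst hy
      simp only []
      rcases nr_sign_cases j with ⟨hs, h0⟩ | ⟨hs, h0⟩ | ⟨hs, h0⟩
      · exact absurd h0 hj
      · rw [hs]; simp [Int.sign_mul_abs]
      · rw [hs]; simp [Int.sign_mul_abs]

theorem nr_hwXn_bound {i j : ℤ} {p : ℤ × ℤ} (hp : p ∈ hwXn i j) :
    p.1.natAbs + p.2.natAbs ≤ i.natAbs + j.natAbs := by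
  have hsle : ∀ a : ℤ, a.sign.natAbs ≤ 1 := by
    intro a
    rcases lt_trichotomy a 0 with h | h | h
    · rw [Int.sign_eq_neg_one_of_neg h]; rfl
    · rw [h]; simp
    · rw [Int.sign_eq_one_of_pos h]; rfl
  rcases nr_mem_hwXn.1 hp with ⟨t, ht, hq⟩ | ⟨t, ht, hq⟩ <;> rw [Prod.ext_iff] at hq <;>
      obtain ⟨h1, h2⟩ := hq
  · rw [← h1, ← h2]
    have h3 : (i.sign * (t : ℤ)).natAbs = i.sign.natAbs * t := by
      rw [Int.natAbs_mul, Int.natAbs_natCast]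
    rw [h3]
    have h4 : i.sign.natAbs * t ≤ 1 * t := Nat.mul_le_mul_right t (hsle i)
    simp only [Int.natAbs_zero]
    omega
  · rw [← h1, ← h2]
    have hc : ((t : ℤ) + 1) = ((t + 1 : ℕ) : ℤ) := by push_cast; ring
    have h3 : (j.sign * ((t : ℤ) + 1)).natAbs = j.sign.natAbs * (t + 1) := by
      rw [hc, Int.natAbs_mul, Int.natAbs_natCast]
    rw [h3]
    have h4 : j.sign.natAbs * (t + 1) ≤ 1 * (t + 1) := Nat.mul_le_mul_right (t + 1) (hsle j)
    omega

theorem nr_hwXn_neg (i j : ℤ) :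
    hwXn (-i) (-j) = (hwXn i j).map (fun p => ((-p.1, -p.2) : ℤ × ℤ)) := by
  unfold hwXn
  rw [List.map_append, List.map_map, List.map_map, Int.natAbs_neg, Int.natAbs_neg]
  congr 1
  · apply List.map_congr_left
    intro t _
    simp [Int.sign_neg]
  · apply List.map_congr_left
    intro t _
    simp [Int.sign_neg]

end HwAux

section RtL

/-- the underlying (ℤ × ℤ)-route of NNHR. -/
def rtL (p : ℤ × ℤ) : List (ℤ × ℤ) :=
  if p.2.natAbs ≤ p.1.natAbs then hwXn p.1 p.2 else (hwXn p.2 p.1).map Prod.swap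

theorem nr_mem_map_swap {L : List (ℤ × ℤ)} {p : ℤ × ℤ} :
    p ∈ L.map Prod.swap ↔ p.swap ∈ L := by
  rw [List.mem_map]
  constructor
  · rintro ⟨a, ha, rfl⟩
    simpa using ha
  · intro h
    exact ⟨p.swap, h, by simp⟩

theorem nr_rtL_head (p : ℤ × ℤ) : (rtL p).head? = some ((0 : ℤ), (0 : ℤ)) := by
  unfold rtL
  split_ifs
  · exact nr_hwXn_head _ _
  · rw [List.head?_map, nr_hwXn_head]
    rfl

theorem nr_rtL_getLast (p : ℤ × ℤ) : (rtL p).getLast? = some p := by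
  unfold rtL
  split_ifs
  · exact nr_hwXn_getLast _ _
  · rw [List.getLast?_map, nr_hwXn_getLast]
    rfl

theorem nr_rtL_nodup (p : ℤ × ℤ) : (rtL p).Nodup := by
  unfold rtL
  split_ifs
  · exact nr_hwXn_nodup _ _
  · exact (nr_hwXn_nodup _ _).map Prod.swap_injective

theorem nr_rtL_chain (p : ℤ × ℤ) :
    (rtL p).Chain' (fun a b => (a.1 - b.1).natAbs + (a.2 - b.2).natAbs = 1) := by
  unfold rtL
  split_ifs
  · exact nr_hwXn_chain _ _
  · rw [List.Chain', List.isChain_map]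
    apply (nr_hwXn_chain p.2 p.1).imp
    intro a b hab
    simp only [Prod.fst_swap, Prod.snd_swap]
    omega

theorem nr_rtL_bound {p x : ℤ × ℤ} (hx : x ∈ rtL p) :
    x.1.natAbs + x.2.natAbs ≤ p.1.natAbs + p.2.natAbs := by
  unfold rtL at hx
  split_ifs at hx
  · exact nr_hwXn_bound hx
  · rw [nr_mem_map_swap] at hx
    have := nr_hwXn_bound hx
    simp only [Prod.fst_swap, Prod.snd_swap] at this
    omega

theorem nr_rtL_neg (p : ℤ × ℤ) :
    rtL ((-p.1, -p.2) : ℤ × ℤ) = (rtL p).map (fun q => ((-q.1, -q.2) : ℤ × ℤ)) := by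
  unfold rtL
  simp only [Int.natAbs_neg]
  split_ifs
  · exact nr_hwXn_neg _ _
  · rw [nr_hwXn_neg, List.map_map, List.map_map]
    apply List.map_congr_left
    intro a _
    rfl

theorem nr_rtL_antipodal {p x : ℤ × ℤ} (h1 : x ∈ rtL p)
    (h2 : ((-x.1, -x.2) : ℤ × ℤ) ∈ rtL p) : x = ((0 : ℤ), (0 : ℤ)) := by
  unfold rtL at h1 h2
  split_ifs at h1 h2
  · exact nr_hwXn_antipodal h1 h2
  · rw [nr_mem_map_swap] at h1 h2
    have := nr_hwXn_antipodal (p := x.swap) h1 (by simpa [Prod.swap] using h2)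
    have hx1 : x.2 = 0 ∧ x.1 = 0 := by
      rw [Prod.ext_iff] at this
      exact ⟨this.1, this.2⟩
    exact Prod.ext hx1.2 hx1.1

theorem nr_rtL_origin : rtL ((0 : ℤ), (0 : ℤ)) = [((0 : ℤ), (0 : ℤ))] := by
  unfold rtL
  rw [if_pos (le_refl _)]
  unfold hwXn
  simp

end RtL


section RoutingAux

variable {k : ℕ} {w : KBS k → ℕ}

theorem nr_route_ne_nil (ρ : Routing k w) (u : Users k w) : ρ.route u ≠ [] := by
  intro h
  have := ρ.head u
  rw [h] at this
  simp at this

theorem nr_origin_mem (ρ : Routing k w) (u : Users k w) : KBS.origin k ∈ ρ.route u :=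
  nr_mem_of_head? (ρ.head u)

theorem nr_last_mem (ρ : Routing k w) (u : Users k w) : u.1 ∈ ρ.route u :=
  nr_mem_of_getLast? (ρ.last u)

theorem nr_route_cons (ρ : Routing k w) (u : Users k w) :
    ∃ s, ρ.route u = KBS.origin k :: s := by
  cases h : ρ.route u with
  | nil => exact absurd h (nr_route_ne_nil ρ u)
  | cons a s =>
    have h2 := ρ.head u
    rw [h, List.head?_cons, Option.some_inj] at h2
    exact ⟨s, by rw [h2]⟩

theorem nr_mem_tail_iff (ρ : Routing k w) (u : Users k w) (j : KBS k) :
    j ∈ (ρ.route u).tail ↔ (j ∈ ρ.route u ∧ j ≠ KBS.origin k) := by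
  obtain ⟨s, hs⟩ := nr_route_cons ρ u
  have hn := ρ.nodup u
  rw [hs] at hn
  rw [List.nodup_cons] at hn
  rw [hs, List.tail_cons, List.mem_cons]
  constructor
  · intro hj
    exact ⟨Or.inr hj, fun he => hn.1 (he ▸ hj)⟩
  · rintro ⟨hj | hj, hne⟩
    · exact absurd hj hne
    · exact hj

theorem nr_mem_dropLast_iff (ρ : Routing k w) (u : Users k w) (j : KBS k) :
    j ∈ (ρ.route u).dropLast ↔ (j ∈ ρ.route u ∧ j ≠ u.1) := by
  have hne := nr_route_ne_nil ρ u
  have hg : (ρ.route u).getLast hne = u.1 := by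
    have h2 := ρ.last u
    rw [List.getLast?_eq_getLast hne, Option.some_inj] at h2
    exact h2
  have hsplit : (ρ.route u).dropLast ++ [u.1] = ρ.route u := by
    rw [← hg]
    exact List.dropLast_append_getLast hne
  have hn := ρ.nodup u
  rw [← hsplit, List.nodup_append] at hn
  have hnotin : u.1 ∉ (ρ.route u).dropLast := fun hmem => hn.2.2 _ hmem _ (by simp) rfl
  constructor
  · intro hj
    refine ⟨?_, fun he => hnotin (he ▸ hj)⟩
    rw [← hsplit]
    exact List.mem_append_left _ hj
  · rintro ⟨hj, hne'⟩
    rw [← hsplit, List.mem_append] at hj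
    rcases hj with hj | hj
    · exact hj
    · simp at hj
      exact absurd hj hne'

theorem nr_route_origin (ρ : Routing k w) (u : Users k w) (h : u.1 = KBS.origin k) :
    ρ.route u = [KBS.origin k] :=
  nr_list_eq_singleton (ρ.nodup u) (ρ.head u) (h ▸ ρ.last u)

/-- degree formula: number of hops of `u`'s route incident to `j`. -/
theorem nr_deg (ρ : Routing k w) (u : Users k w) (j : KBS k) :
    (((ρ.route u).zip (ρ.route u).tail).countP fun q => j = q.1 ∨ j = q.2)
      = (if j ∈ ρ.route u ∧ j ≠ u.1 then 1 else 0)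
        + (if j ∈ ρ.route u ∧ j ≠ KBS.origin k then 1 else 0) := by
  rw [nr_deg_count j _ (ρ.nodup u)]
  congr 1
  · simp only [nr_mem_dropLast_iff ρ u j]
  · simp only [nr_mem_tail_iff ρ u j]

/-- a street hop spans at least one grid step. -/
theorem nr_gdist_pos {a b : KBS k} (h : street a b) : 1 ≤ gdist a b := by
  rcases h with ⟨hne, _⟩
  unfold gdist
  by_contra hcon
  push_neg at hcon
  apply hne
  apply Subtype.ext
  apply Prod.ext <;> omega

end RoutingAux

section Construction

variable {k : ℕ}

/-- the NNHR route as a list of base stations. -/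
def nnrt (p : KBS k) : List (KBS k) :=
  (rtL p.1).pmap (fun x hx => (⟨x, hx⟩ : KBS k))
    (fun x hx => le_trans (nr_rtL_bound hx) p.2)

theorem nr_nnrt_val (p : KBS k) : (nnrt p).map Subtype.val = rtL p.1 := by
  unfold nnrt
  erw [List.map_pmap]
  erw [List.pmap_eq_map]
  exact List.map_id _

theorem nr_mem_nnrt {p : KBS k} {b : KBS k} : b ∈ nnrt p ↔ b.1 ∈ rtL p.1 := by
  unfold nnrt
  erw [List.mem_pmap]
  constructor
  · rintro ⟨a, ha, rfl⟩
    exact ha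
  · intro h
    exact ⟨b.1, h, Subtype.ext rfl⟩

theorem nr_nnrt_nodup (p : KBS k) : (nnrt p).Nodup := by
  have := nr_rtL_nodup p.1
  rw [← nr_nnrt_val] at this
  exact this.of_map _

theorem nr_nnrt_head (p : KBS k) : (nnrt p).head? = some (KBS.origin k) := by
  have h := nr_rtL_head p.1
  erw [← nr_nnrt_val, List.head?_map] at h
  obtain ⟨b, hb, hval⟩ := Option.map_eq_some_iff.1 h
  erw [hb, Option.some_inj]
  exact Subtype.ext hval

theorem nr_nnrt_getLast (p : KBS k) : (nnrt p).getLast? = some p := by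
  have h := nr_rtL_getLast p.1
  erw [← nr_nnrt_val, List.getLast?_map] at h
  obtain ⟨b, hb, hval⟩ := Option.map_eq_some_iff.1 h
  erw [hb, Option.some_inj]
  exact Subtype.ext hval

theorem nr_nnrt_chain (p : KBS k) :
    (nnrt p).Chain' (fun a b => street a b ∧ gdist a b = 1) := by
  have h := nr_rtL_chain p.1
  erw [← nr_nnrt_val, List.Chain', List.isChain_map] at h
  apply h.imp
  intro a b hab
  have hg : gdist a b = 1 := hab
  refine ⟨⟨?_, ?_⟩, hg⟩
  · intro he
    rw [he] at hab
    simp at hab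
  · unfold gdist at hg
    have : a.1.1 - b.1.1 = 0 ∨ a.1.2 - b.1.2 = 0 := by omega
    rcases this with h0 | h0
    · exact Or.inl (by omega)
    · exact Or.inr (by omega)

theorem nr_nnrt_origin : nnrt (KBS.origin k) = [KBS.origin k] := by
  have hval : (nnrt (KBS.origin k)).map Subtype.val = [((0 : ℤ), (0 : ℤ))] := by
    rw [nr_nnrt_val]
    exact nr_rtL_origin
  cases h : nnrt (KBS.origin k) with
  | nil => rw [h] at hval; cases hval
  | cons a s =>
    erw [h, List.map_cons] at hval
    rw [List.cons_eq_cons] at hval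
    obtain ⟨h1, h2⟩ := hval
    have hs : s = [] := by
      cases s with
      | nil => rfl
      | cons b t => cases h2
    rw [hs]
    congr 1
    exact Subtype.ext h1

theorem nr_nnrt_neg (p : KBS k) (b : KBS k) :
    b ∈ nnrt p ↔ KBS.neg b ∈ nnrt (KBS.neg p) := by
  rw [nr_mem_nnrt, nr_mem_nnrt]
  show _ ↔ ((-b.1.1, -b.1.2) : ℤ × ℤ) ∈ rtL ((-p.1.1, -p.1.2) : ℤ × ℤ)
  rw [show ((-p.1.1, -p.1.2) : ℤ × ℤ) = ((-(p.1).1, -(p.1).2) : ℤ × ℤ) from rfl, nr_rtL_neg]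
  rw [List.mem_map]
  constructor
  · intro h
    exact ⟨b.1, h, rfl⟩
  · rintro ⟨a, ha, haeq⟩
    rw [Prod.ext_iff] at haeq
    simp only [] at haeq
    have : a = b.1 := Prod.ext (by omega) (by omega)
    rw [← this]
    exact ha

theorem nr_nnrt_antipodal {p : KBS k} {b : KBS k} (h1 : b ∈ nnrt p)
    (h2 : KBS.neg b ∈ nnrt p) : b = KBS.origin k := by
  rw [nr_mem_nnrt] at h1 h2
  have := nr_rtL_antipodal h1 h2
  exact Subtype.ext this

variable (w : KBS k → ℕ)

/-- the NNHR routing strategy. -/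
def nnhr : Routing k w where
  route := fun u => nnrt u.1
  nodup := fun u => nr_nnrt_nodup u.1
  head := fun u => nr_nnrt_head u.1
  last := fun u => nr_nnrt_getLast u.1
  chain := fun u => ((nr_nnrt_chain u.1).imp fun _ _ h => h.1)

theorem nr_nnhr_unit (u : Users k w) {q : KBS k × KBS k}
    (hq : q ∈ ((nnhr w).route u).zip ((nnhr w).route u).tail) : gdist q.1 q.2 = 1 := by
  have h := nr_zip_tail_rel (nr_nnrt_chain u.1) (a := q.1) (b := q.2) hq
  exact h.2

end Construction

section SumAux

variable {k : ℕ} {w : KBS k → ℕ}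

theorem nr_sum_users {M : Type*} [AddCommMonoid M] (F : KBS k → M) :
    ∑ u : Users k w, F u.1 = ∑ b : KBS k, (w b) • F b := by
  rw [← Fintype.sum_equiv
    (show (Σ b : KBS k, Fin (w b)) ≃ Users k w from Equiv.refl _)
    (fun x => F x.1) (fun u => F u.1) (fun x => rfl)]
  rw [← Finset.univ_sigma_univ, Finset.sum_sigma]
  apply Finset.sum_congr rfl
  intro b _
  have hc : ∑ m : Fin (w b), F (⟨b, m⟩ : Σ b : KBS k, Fin (w b)).1 = ∑ _m : Fin (w b), F b :=
    rfl
  rw [hc, Finset.sum_const, Finset.card_univ, Fintype.card_fin]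

theorem nr_sum_ite_mem_list {β : Type*} [Fintype β] [DecidableEq β] (L : List β)
    (hL : L.Nodup) (c : ℝ) :
    ∑ x : β, (if x ∈ L then c else 0) = (L.length : ℝ) * c := by
  have h1 : ∀ x : β, (if x ∈ L then c else 0) = (if x ∈ L.toFinset then c else 0) := by
    intro x
    simp [List.mem_toFinset]
  simp_rw [h1]
  rw [Finset.sum_ite_mem, Finset.univ_inter, Finset.sum_const,
    List.toFinset_card_of_nodup hL]
  simp [mul_comm]

end SumAux


section Upper

variable {k : ℕ} {w : KBS k → ℕ}

/-- Part (i): every achievable min-rate is at most `R*_{e2e}`. -/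
theorem nr_upper (hw0 : 0 < w (KBS.origin k))
    (R : ℕ → ℝ) (Ra : ℝ) (hRa : 0 < Ra)
    (hRpos : ∀ q, 1 ≤ q → 0 < R q)
    (hRanti : ∀ q q', 1 ≤ q → q < q' → R q' < R q)
    (ρ : Routing k w) (θ : ℝ)
    (hθ : ∃ τ : KLink k w → Users k w → ℝ, Feasible ρ τ ∧
      θ = Finset.univ.inf' ⟨⟨KBS.origin k, ⟨0, hw0⟩⟩, Finset.mem_univ _⟩ (e2e R Ra ρ τ)) :
    θ ≤ ((w (KBS.origin k) : ℝ) / Ra +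
      ((∑ b : KBS k, (w b : ℝ)) - (w (KBS.origin k) : ℝ)) / R 1)⁻¹ := by
  classical
  obtain ⟨τ, ⟨hb01, hzero, hbs⟩, hθeq⟩ := hθ
  have hR1 : 0 < R 1 := hRpos 1 le_rfl
  set W0 : ℝ := (w (KBS.origin k) : ℝ) with hW0def
  set U' : ℝ := ∑ b : KBS k, (w b : ℝ) with hU'def
  set S : ℝ := W0 / Ra + (U' - W0) / R 1 with hSdef
  have hUW : W0 ≤ U' := by
    apply Finset.single_le_sum (f := fun b => (w b : ℝ)) (fun b _ => by positivity)
      (Finset.mem_univ (KBS.origin k))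
  have hS : 0 < S := by
    apply add_pos_of_pos_of_nonneg
    · apply div_pos _ hRa
      rw [hW0def]
      exact_mod_cast hw0
    · apply div_nonneg _ hR1.le
      linarith
  -- hops span at least one grid step
  have hhop : ∀ (u : Users k w) (q : KBS k × KBS k),
      q ∈ (ρ.route u).zip (ρ.route u).tail → 1 ≤ gdist q.1 q.2 := by
    intro u q hq
    obtain ⟨a, b⟩ := q
    exact nr_gdist_pos (nr_zip_tail_rel (ρ.chain u) hq)
  have hrate_nonneg : ∀ (l : KLink k w) (u : Users k w), 0 ≤ linkRate R Ra l * τ l u := by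
    intro l u
    cases l with
    | inl u' => exact mul_nonneg hRa.le (hb01 _ _).1
    | inr q =>
      by_cases hq : isHop ρ (Sum.inr q) u
      · have h1 : 1 ≤ gdist q.1 q.2 := hhop u q hq
        exact mul_nonneg (hRpos _ h1).le (hb01 _ _).1
      · rw [hzero _ _ hq, mul_zero]
  have he2e_nonneg : ∀ u : Users k w, 0 ≤ e2e R Ra ρ τ u := by
    intro u
    unfold e2e
    exact Finset.le_inf' _ _ (fun l _ => hrate_nonneg l u)
  have hθ0 : 0 ≤ θ := by
    rw [hθeq]
    exact Finset.le_inf' _ _ (fun u _ => he2e_nonneg u)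
  have hθle : ∀ u : Users k w, θ ≤ e2e R Ra ρ τ u := by
    intro u
    rw [hθeq]
    exact Finset.inf'_le _ (Finset.mem_univ u)
  -- key: a first link for each user
  have hkey : ∀ u : Users k w, ∃ l : KLink k w, isHop ρ l u ∧
      incident l (KBS.origin k) ∧
      (if u.1 = KBS.origin k then θ / Ra else θ / R 1) ≤ τ l u := by
    intro u
    by_cases hu : u.1 = KBS.origin k
    · refine ⟨Sum.inl u, rfl, hu, ?_⟩
      have h1 : e2e R Ra ρ τ u ≤ linkRate R Ra (Sum.inl u) * τ (Sum.inl u) u := by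
        unfold e2e
        exact Finset.inf'_le (fun l => linkRate R Ra l * τ l u) (Finset.mem_filter.2
          ⟨Finset.mem_univ _, (rfl : (u : Users k w) = u)⟩)
      have h2 : linkRate R Ra (Sum.inl u : KLink k w) = Ra := rfl
      rw [h2] at h1
      rw [if_pos hu, div_le_iff₀ hRa]
      have := hθle u
      linarith [mul_comm Ra (τ (Sum.inl u) u)]
    · obtain ⟨s, hs⟩ := nr_route_cons ρ u
      obtain ⟨b, t, hbt⟩ : ∃ b t, s = b :: t := by
        cases s with
        | nil =>
          exfalso
          have hl := ρ.last u
          rw [hs] at hl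
          simp only [List.getLast?_singleton, Option.some_inj] at hl
          exact hu hl.symm
        | cons b t => exact ⟨b, t, rfl⟩
      have hmem : ((KBS.origin k, b) : KBS k × KBS k) ∈
          (ρ.route u).zip (ρ.route u).tail := by
        rw [hs, hbt]
        simp only [List.tail_cons, List.zip_cons_cons]
        exact List.mem_cons_self
      refine ⟨Sum.inr (KBS.origin k, b), hmem, Or.inl rfl, ?_⟩
      rw [if_neg hu]
      have hg1 : 1 ≤ gdist (KBS.origin k) b := hhop u _ hmem
      have hRg : 0 < R (gdist (KBS.origin k) b) := hRpos _ hg1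
      have hRle : R (gdist (KBS.origin k) b) ≤ R 1 := by
        rcases eq_or_lt_of_le hg1 with he | hlt
        · rw [← he]
        · exact (hRanti 1 _ le_rfl hlt).le
      have h1 : e2e R Ra ρ τ u ≤
          linkRate R Ra (Sum.inr (KBS.origin k, b) : KLink k w)
            * τ (Sum.inr (KBS.origin k, b)) u := by
        unfold e2e
        exact Finset.inf'_le (fun l => linkRate R Ra l * τ l u)
          (Finset.mem_filter.2 ⟨Finset.mem_univ _, hmem⟩)
      have h2 : linkRate R Ra (Sum.inr (KBS.origin k, b) : KLink k w)
          = R (gdist (KBS.origin k) b) := rfl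
      rw [h2] at h1
      have hτn := (hb01 (Sum.inr (KBS.origin k, b)) u).1
      have h3 : θ / R 1 ≤ θ / R (gdist (KBS.origin k) b) := by
        rw [div_le_div_iff₀ hR1 hRg]
        exact mul_le_mul_of_nonneg_left hRle hθ0
      have h4 : θ / R (gdist (KBS.origin k) b) ≤ τ (Sum.inr (KBS.origin k, b)) u := by
        rw [div_le_iff₀ hRg]
        have := hθle u
        linarith [mul_comm (R (gdist (KBS.origin k) b)) (τ (Sum.inr (KBS.origin k, b)) u)]
      linarith
  choose fl hfl1 hfl2 hfl3 using hkey
  -- summing the per-user time requirements at the origin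
  have hsum1 : ∑ u : Users k w, (if u.1 = KBS.origin k then θ / Ra else θ / R 1)
      ≤ ∑ u : Users k w, τ (fl u) u :=
    Finset.sum_le_sum fun u _ => hfl3 u
  have hsum2 : ∑ u : Users k w, τ (fl u) u ≤ 1 := by
    have h2 : ∀ u : Users k w, τ (fl u) u
        ≤ ∑ l : KLink k w, (if incident l (KBS.origin k) then τ l u else 0) := by
      intro u
      have heq : τ (fl u) u = if incident (fl u) (KBS.origin k) then τ (fl u) u else 0 :=
        (if_pos (hfl2 u)).symm
      rw [heq]
      refine Finset.single_le_sum
        (f := fun l => if incident l (KBS.origin k) then τ l u else 0)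
        (fun l _ => ?_) (Finset.mem_univ (fl u))
      by_cases h : incident l (KBS.origin k)
      · rw [if_pos h]
        exact (hb01 l u).1
      · rw [if_neg h]
    calc ∑ u : Users k w, τ (fl u) u
        ≤ ∑ u : Users k w, ∑ l : KLink k w,
            (if incident l (KBS.origin k) then τ l u else 0) :=
          Finset.sum_le_sum fun u _ => h2 u
      _ = ∑ l : KLink k w, ∑ u : Users k w,
            (if incident l (KBS.origin k) then τ l u else 0) := Finset.sum_comm
      _ ≤ 1 := hbs (KBS.origin k)
  -- evaluate the left sum
  have hsplit : ∑ u : Users k w, (if u.1 = KBS.origin k then θ / Ra else θ / R 1)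
      = θ * S := by
    rw [nr_sum_users (fun b => if b = KBS.origin k then θ / Ra else θ / R 1)]
    rw [← Finset.add_sum_erase _ _ (Finset.mem_univ (KBS.origin k))]
    rw [if_pos rfl]
    have herase : ∀ b ∈ Finset.univ.erase (KBS.origin k),
        (w b) • (if b = KBS.origin k then θ / Ra else θ / R 1) = (w b : ℝ) * (θ / R 1) := by
      intro b hb
      rw [if_neg (Finset.mem_erase.1 hb).1, nsmul_eq_mul]
    rw [Finset.sum_congr rfl herase, ← Finset.sum_mul]
    have hW : ∑ b ∈ Finset.univ.erase (KBS.origin k), (w b : ℝ) = U' - W0 := by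
      have hh := Finset.add_sum_erase Finset.univ (fun b => (w b : ℝ))
        (Finset.mem_univ (KBS.origin k))
      rw [hU'def, hW0def]
      linarith
    rw [hW, nsmul_eq_mul, hSdef, hW0def]
    ring
  have hθS : θ * S ≤ 1 := le_trans (hsplit ▸ hsum1) hsum2
  calc θ = θ * S * S⁻¹ := by field_simp
    _ ≤ 1 * S⁻¹ := mul_le_mul_of_nonneg_right hθS (inv_nonneg.2 hS.le)
    _ = S⁻¹ := one_mul _

end Upper

/-- **Optimality of NNHR in the `k`-ring deployment (Theorem 3).** With equal access
rate `Ra` for all users and backhaul hop rates `R 1 > R 2 > … > 0`: (i) for every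
routing strategy the max-min rate is at most
`R*_{e2e} = (w₀₀/Ra + (U − w₀₀)/R1)⁻¹` (where `U = Σ w` is the total number of users);
(ii) if moreover `w₀₀ ≥ w_{i,j}` and `w_{i,j} = w_{−i,−j}` for all `(i,j)`, then some
NNHR strategy attains this value, so NNHR is optimal and the globally optimal max-min
rate equals `R*_{e2e}`. -/
theorem kring_NNHR_optimal (k : ℕ) (hk : 1 ≤ k) (w : KBS k → ℕ)
    (hw0 : 0 < w (KBS.origin k))
    (R : ℕ → ℝ) (Ra : ℝ) (hRa : 0 < Ra)
    (hRpos : ∀ q, 1 ≤ q → 0 < R q)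
    (hRanti : ∀ q q', 1 ≤ q → q < q' → R q' < R q) :
    (∀ ρ : Routing k w, maxmin R Ra hw0 ρ ≤
      ((w (KBS.origin k) : ℝ) / Ra +
        ((∑ b : KBS k, (w b : ℝ)) - (w (KBS.origin k) : ℝ)) / R 1)⁻¹) ∧
    ((∀ b : KBS k, w b = w (KBS.neg b)) →
      (∀ b : KBS k, w b ≤ w (KBS.origin k)) →
      ∃ ρ : Routing k w, IsNNHR ρ ∧
        maxmin R Ra hw0 ρ =
          ((w (KBS.origin k) : ℝ) / Ra +
            ((∑ b : KBS k, (w b : ℝ)) - (w (KBS.origin k) : ℝ)) / R 1)⁻¹) := by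
  classical
  have hR1 : 0 < R 1 := hRpos 1 le_rfl
  set W0 : ℝ := (w (KBS.origin k) : ℝ) with hW0def
  set U' : ℝ := ∑ b : KBS k, (w b : ℝ) with hU'def
  set S : ℝ := W0 / Ra + (U' - W0) / R 1 with hSdef
  have hUW : W0 ≤ U' := by
    apply Finset.single_le_sum (f := fun b => (w b : ℝ)) (fun b _ => by positivity)
      (Finset.mem_univ (KBS.origin k))
  have hS : 0 < S := by
    apply add_pos_of_pos_of_nonneg
    · apply div_pos _ hRa
      rw [hW0def]
      exact_mod_cast hw0
    · apply div_nonneg _ hR1.le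
      linarith
  have hB0 : (0 : ℝ) ≤ S⁻¹ := inv_nonneg.2 hS.le
  constructor
  · -- part (i): upper bound for every routing strategy
    intro ρ
    unfold maxmin
    apply Real.sSup_le _ hB0
    intro θ hθ
    exact nr_upper hw0 R Ra hRa hRpos hRanti ρ θ hθ
  · -- part (ii): NNHR achieves the bound
    intro hsym hmax
    set B : ℝ := S⁻¹ with hBdef
    have hroute : ∀ u : Users k w, (nnhr w).route u = nnrt u.1 := fun _ => rfl
    have hmemO : ∀ b : KBS k, KBS.origin k ∈ nnrt b :=
      fun b => nr_mem_of_head? (nr_nnrt_head b)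
    have hnegneg : ∀ b : KBS k, KBS.neg (KBS.neg b) = b := by
      intro b
      apply Subtype.ext
      show ((- -(b.1).1, - -(b.1).2) : ℤ × ℤ) = b.1
      apply Prod.ext <;> simp
    have hnegO : KBS.neg (KBS.origin k) = KBS.origin k := by
      apply Subtype.ext
      show ((-0, -0) : ℤ × ℤ) = ((0 : ℤ), (0 : ℤ))
      norm_num
    -- load of NNHR as a sum
    have hloadsum : ∀ j : KBS k, load (nnhr w) j
        = ∑ b : KBS k, (if j ∈ nnrt b then w b else 0) := by
      intro j
      unfold load
      rw [Finset.card_filter]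
      have h1 : ∀ u : Users k w, (if j ∈ (nnhr w).route u then 1 else 0)
          = (if j ∈ nnrt u.1 then (1 : ℕ) else 0) := by
        intro u
        rw [hroute]
      rw [Finset.sum_congr rfl (fun u _ => h1 u),
        nr_sum_users (fun b => if j ∈ nnrt b then (1 : ℕ) else 0)]
      apply Finset.sum_congr rfl
      intro b _
      by_cases h : j ∈ nnrt b <;> simp [h]
    -- symmetry of loads
    have hloadsym : ∀ j : KBS k,
        ∑ b : KBS k, (if j ∈ nnrt b then w b else 0)
          = ∑ b : KBS k, (if KBS.neg j ∈ nnrt b then w b else 0) := by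
      intro j
      apply Fintype.sum_equiv (⟨KBS.neg, KBS.neg, hnegneg, hnegneg⟩ : KBS k ≃ KBS k)
      intro b
      show (if j ∈ nnrt b then w b else 0)
        = (if KBS.neg j ∈ nnrt (KBS.neg b) then w (KBS.neg b) else 0)
      rw [← hsym b]
      exact if_congr (nr_nnrt_neg b j) rfl rfl
    -- the NNHR scheduling matrix
    set τ : KLink k w → Users k w → ℝ := fun l u =>
      match l with
      | .inl u' => if u' = u then B / Ra else 0
      | .inr q => if q ∈ ((nnhr w).route u).zip ((nnhr w).route u).tail
          then B / R 1 else 0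
      with hτdef
    have hτ_inl : ∀ (u' u : Users k w),
        τ (Sum.inl u') u = if u' = u then B / Ra else 0 := fun _ _ => rfl
    have hτ_inr : ∀ (q : KBS k × KBS k) (u : Users k w),
        τ (Sum.inr q) u
          = if q ∈ ((nnhr w).route u).zip ((nnhr w).route u).tail
              then B / R 1 else 0 :=
      fun _ _ => rfl
    have hBRa : B / Ra ≤ 1 := by
      rw [div_le_one hRa]
      have h2 : (1 : ℝ) ≤ W0 := by
        rw [hW0def]
        exact_mod_cast hw0
      have h3 : 1 / Ra ≤ S := by
        have h4 : 1 / Ra ≤ W0 / Ra := by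
          rw [div_le_div_iff₀ hRa hRa]
          nlinarith
        have h5 : 0 ≤ (U' - W0) / R 1 := div_nonneg (by linarith) hR1.le
        rw [hSdef]
        linarith
      calc B = S⁻¹ := hBdef
        _ ≤ (1 / Ra)⁻¹ := by
            apply inv_anti₀ (by positivity) h3
        _ = Ra := by rw [one_div, inv_inv]
    -- a user with a backhaul hop is not served at the origin
    have hhopO : ∀ (u : Users k w) (q : KBS k × KBS k),
        q ∈ ((nnhr w).route u).zip ((nnhr w).route u).tail →
          u.1 ≠ KBS.origin k := by
      intro u q hq he
      rw [hroute, he, nr_nnrt_origin] at hq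
      simp at hq
    have hBR1 : ∀ (u : Users k w), u.1 ≠ KBS.origin k → B / R 1 ≤ 1 := by
      intro u hu
      rw [div_le_one hR1]
      have h6 : (w (KBS.origin k) : ℝ) + (w u.1 : ℝ) ≤ U' := by
        rw [hU'def]
        have hsub : ({KBS.origin k, u.1} : Finset (KBS k)) ⊆ Finset.univ :=
          Finset.subset_univ _
        have h7 := Finset.sum_le_sum_of_subset_of_nonneg hsub
          (fun b _ _ => by positivity : ∀ b ∈ (Finset.univ : Finset (KBS k)),
            b ∉ ({KBS.origin k, u.1} : Finset (KBS k)) → (0 : ℝ) ≤ (w b : ℝ))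
        rwa [Finset.sum_pair (fun he => hu he.symm)] at h7
      have h8 : (1 : ℝ) ≤ (w u.1 : ℝ) := by
        exact_mod_cast Fin.pos u.2
      have h9 : 1 / R 1 ≤ S := by
        have h10 : 1 / R 1 ≤ (U' - W0) / R 1 := by
          rw [div_le_div_iff₀ hR1 hR1]
          have : (1 : ℝ) ≤ U' - W0 := by
            rw [hW0def]
            linarith
          nlinarith
        have h11 : 0 ≤ W0 / Ra := by positivity
        rw [hSdef]
        linarith
      calc B = S⁻¹ := hBdef
        _ ≤ (1 / R 1)⁻¹ := by
            apply inv_anti₀ (by positivity) h9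
        _ = R 1 := by rw [one_div, inv_inv]
    -- feasibility of τ
    have hfeas : Feasible (nnhr w) τ := by
      refine ⟨?_, ?_, ?_⟩
      · -- entries in [0,1]
        intro l u
        cases l with
        | inl u' =>
          rw [hτ_inl]
          by_cases h : u' = u
          · rw [if_pos h]
            exact ⟨by positivity, hBRa⟩
          · rw [if_neg h]
            exact ⟨le_refl 0, zero_le_one⟩
        | inr q =>
          rw [hτ_inr]
          by_cases h : q ∈ ((nnhr w).route u).zip ((nnhr w).route u).tail
          · rw [if_pos h]
            refine ⟨by positivity, ?_⟩
            exact hBR1 u (hhopO u q h)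
          · rw [if_neg h]
            exact ⟨le_refl 0, zero_le_one⟩
      · -- zero on non-hops
        intro l u hl
        cases l with
        | inl u' =>
          rw [hτ_inl, if_neg (fun (he : u' = u) => hl he)]
        | inr q =>
          rw [hτ_inr, if_neg (fun (he : q ∈ ((nnhr w).route u).zip
            ((nnhr w).route u).tail) => hl he)]
      · -- per-BS activity constraint
        intro j
        rw [Finset.sum_comm]
        -- inner sum for each user
        have hinner : ∀ u : Users k w,
            (∑ l : KLink k w, if incident l j then τ l u else 0)
              = (if u.1 = j then B / Ra else 0)
                + (((((nnhr w).route u).zip ((nnhr w).route u).tail).countP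
                    (fun q => j = q.1 ∨ j = q.2) : ℕ) : ℝ) * (B / R 1) := by
          intro u
          rw [Fintype.sum_sum_type]
          congr 1
          · -- access links
            have hpt : ∀ u' : Users k w,
                (if incident (Sum.inl u' : KLink k w) j then τ (Sum.inl u') u else 0)
                  = (if u' = u then (if u.1 = j then B / Ra else 0) else 0) := by
              intro u'
              have hi : incident (Sum.inl u' : KLink k w) j ↔ u'.1 = j := Iff.rfl
              by_cases h2 : u'.1 = j
              · rw [if_pos (hi.2 h2), hτ_inl]
                by_cases h1 : u' = u
                · subst h1
                  rw [if_pos rfl, if_pos rfl, if_pos h2]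
                · rw [if_neg h1, if_neg h1]
              · rw [if_neg (fun hx => h2 (hi.1 hx))]
                by_cases h1 : u' = u
                · subst h1
                  rw [if_pos rfl, if_neg h2]
                · rw [if_neg h1]
            rw [Finset.sum_congr rfl (fun u' _ => hpt u'), Finset.sum_ite_eq'
              Finset.univ u (fun _ => if u.1 = j then B / Ra else 0),
              if_pos (Finset.mem_univ u)]
          · -- backhaul links
            set Z := ((nnhr w).route u).zip ((nnhr w).route u).tail with hZdef
            set Zf := Z.filter (fun q => decide (j = q.1 ∨ j = q.2)) with hZfdef
            have hZnd : Z.Nodup := nr_zip_tail_nodup ((nnhr w).nodup u)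
            have hZfnd : Zf.Nodup := hZnd.filter _
            have hmemZf : ∀ q : KBS k × KBS k,
                q ∈ Zf ↔ (q ∈ Z ∧ (j = q.1 ∨ j = q.2)) := by
              intro q
              rw [hZfdef, List.mem_filter]
              simp
            have hpt : ∀ q : KBS k × KBS k,
                (if incident (Sum.inr q : KLink k w) j then τ (Sum.inr q) u else 0)
                  = (if q ∈ Zf then B / R 1 else 0) := by
              intro q
              have hi : incident (Sum.inr q : KLink k w) j ↔ (j = q.1 ∨ j = q.2) :=
                Iff.rfl
              by_cases h1 : j = q.1 ∨ j = q.2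
              · rw [if_pos (hi.2 h1), hτ_inr]
                by_cases h2 : q ∈ Z
                · rw [if_pos h2, if_pos ((hmemZf q).2 ⟨h2, h1⟩)]
                · rw [if_neg h2, if_neg (fun hx => h2 ((hmemZf q).1 hx).1)]
              · rw [if_neg (fun hx => h1 (hi.1 hx)),
                  if_neg (fun hx => h1 ((hmemZf q).1 hx).2)]
            rw [Finset.sum_congr rfl (fun q _ => hpt q)]
            have hks : (∑ q : KBS k × KBS k, if q ∈ Zf then B / R 1 else 0)
                = (Zf.length : ℝ) * (B / R 1) := by
              have h1 : ∀ q : KBS k × KBS k, (if q ∈ Zf then B / R 1 else 0)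
                  = (if q ∈ Zf.toFinset then B / R 1 else 0) := by
                intro q
                by_cases h : q ∈ Zf
                · rw [if_pos h, if_pos (List.mem_toFinset.2 h)]
                · rw [if_neg h, if_neg (fun hx => h (List.mem_toFinset.1 hx))]
              rw [Finset.sum_congr rfl (fun q _ => h1 q), Finset.sum_ite_mem,
                Finset.univ_inter, Finset.sum_const, List.toFinset_card_of_nodup hZfnd]
              simp [mul_comm]
            exact hks.trans (by rw [hZfdef, ← List.countP_eq_length_filter])
        rw [Finset.sum_congr rfl (fun u _ => hinner u), Finset.sum_add_distrib]
        -- the access part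
        have hfirst : ∑ u : Users k w, (if u.1 = j then B / Ra else 0)
            = (w j : ℝ) * (B / Ra) := by
          rw [nr_sum_users (fun b => if b = j then B / Ra else 0)]
          have hpt : ∀ b : KBS k, (w b) • (if b = j then B / Ra else 0)
              = (if b = j then (w b : ℝ) * (B / Ra) else 0) := by
            intro b
            by_cases h : b = j <;> simp [h]
          rw [Finset.sum_congr rfl (fun b _ => hpt b),
            Finset.sum_ite_eq' Finset.univ j (fun b => (w b : ℝ) * (B / Ra)),
            if_pos (Finset.mem_univ j)]
        -- the backhaul part
        have hcount : ∀ u : Users k w,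
            ((((nnhr w).route u).zip ((nnhr w).route u).tail).countP
              (fun q => j = q.1 ∨ j = q.2))
              = (if j ∈ nnrt u.1 ∧ j ≠ u.1 then 1 else 0)
                + (if j ∈ nnrt u.1 ∧ j ≠ KBS.origin k then 1 else 0) := by
          intro u
          rw [nr_deg (nnhr w) u j, hroute]
        have hsecond : ∑ u : Users k w,
            (((((nnhr w).route u).zip ((nnhr w).route u).tail).countP
              (fun q => j = q.1 ∨ j = q.2) : ℕ) : ℝ) * (B / R 1)
            = ((∑ b : KBS k, (w b) * ((if j ∈ nnrt b ∧ j ≠ b then 1 else 0)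
                + (if j ∈ nnrt b ∧ j ≠ KBS.origin k then 1 else 0)) : ℕ) : ℝ)
              * (B / R 1) := by
          rw [← Finset.sum_mul]
          congr 1
          have hpt : ∀ u : Users k w,
              (((((nnhr w).route u).zip ((nnhr w).route u).tail).countP
                (fun q => j = q.1 ∨ j = q.2) : ℕ) : ℝ)
                = (((if j ∈ nnrt u.1 ∧ j ≠ u.1 then 1 else 0)
                    + (if j ∈ nnrt u.1 ∧ j ≠ KBS.origin k then 1 else 0) : ℕ) : ℝ) := by
            intro u
            rw [hcount u]
          rw [Finset.sum_congr rfl (fun u _ => hpt u),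
            nr_sum_users (fun b => (((if j ∈ nnrt b ∧ j ≠ b then 1 else 0)
              + (if j ∈ nnrt b ∧ j ≠ KBS.origin k then 1 else 0) : ℕ) : ℝ))]
          push_cast
          apply Finset.sum_congr rfl
          intro b _
          rw [nsmul_eq_mul]
        rw [hfirst, hsecond]
        -- the key combinatorial bound
        have hDo : ((if j ∈ nnrt (KBS.origin k) ∧ j ≠ KBS.origin k then 1 else 0)
            + (if j ∈ nnrt (KBS.origin k) ∧ j ≠ KBS.origin k then 1 else 0) : ℕ)
            = 0 := by
          rw [nr_nnrt_origin]
          simp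
        have hsum0 : (∑ b : KBS k, (if b = KBS.origin k then 0 else w b))
            + w (KBS.origin k) = ∑ b : KBS k, w b := by
          rw [← Finset.add_sum_erase _ w (Finset.mem_univ (KBS.origin k)),
            ← Finset.add_sum_erase _ (fun b => if b = KBS.origin k then 0 else w b)
              (Finset.mem_univ (KBS.origin k))]
          rw [if_pos rfl]
          have hcg : ∀ b ∈ Finset.univ.erase (KBS.origin k),
              (if b = KBS.origin k then 0 else w b) = w b :=
            fun b hb => if_neg (Finset.mem_erase.1 hb).1
          rw [Finset.sum_congr rfl hcg]
          simp only [Nat.zero_add]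
          exact Nat.add_comm _ _
        have hND : (∑ b : KBS k, (w b) * ((if j ∈ nnrt b ∧ j ≠ b then 1 else 0)
              + (if j ∈ nnrt b ∧ j ≠ KBS.origin k then 1 else 0)))
            + w (KBS.origin k) ≤ ∑ b : KBS k, w b := by
          by_cases hj : j = KBS.origin k
          · subst hj
            have hpt : ∀ b : KBS k,
                (w b) * ((if KBS.origin k ∈ nnrt b ∧ KBS.origin k ≠ b then 1 else 0)
                  + (if KBS.origin k ∈ nnrt b ∧ KBS.origin k ≠ KBS.origin k
                      then 1 else 0))
                ≤ (if b = KBS.origin k then 0 else w b) := by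
              intro b
              have h2 : ¬ (KBS.origin k ∈ nnrt b ∧ KBS.origin k ≠ KBS.origin k) :=
                fun ⟨_, h⟩ => h rfl
              rw [if_neg h2]
              by_cases hb : b = KBS.origin k
              · subst hb
                have h3 : ¬ (KBS.origin k ∈ nnrt (KBS.origin k)
                    ∧ KBS.origin k ≠ KBS.origin k) :=
                  fun hx => hx.2 rfl
                rw [if_neg h3, if_pos rfl]
                omega
              · rw [if_neg hb]
                by_cases h4 : KBS.origin k ∈ nnrt b ∧ KBS.origin k ≠ b
                · rw [if_pos h4]
                  omega
                · rw [if_neg h4]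
                  omega
            exact le_trans
              (Nat.add_le_add_right (Finset.sum_le_sum (fun b _ => hpt b)) _)
              (le_of_eq hsum0)
          · -- j ≠ origin : use symmetry and antipodality
            have hstep1 : (∑ b : KBS k, (w b)
                  * ((if j ∈ nnrt b ∧ j ≠ b then 1 else 0)
                    + (if j ∈ nnrt b ∧ j ≠ KBS.origin k then 1 else 0)))
                ≤ ∑ b : KBS k, 2 * (if j ∈ nnrt b then w b else 0) := by
              apply Finset.sum_le_sum
              intro b _
              by_cases h : j ∈ nnrt b
              · rw [if_pos h]
                have h1 : ((if j ∈ nnrt b ∧ j ≠ b then 1 else 0)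
                    + (if j ∈ nnrt b ∧ j ≠ KBS.origin k then 1 else 0) : ℕ) ≤ 2 := by
                  split_ifs <;> omega
                exact le_trans (Nat.mul_le_mul_left _ h1)
                  (le_of_eq (Nat.mul_comm _ _))
              · have h2 : ¬ (j ∈ nnrt b ∧ j ≠ b) := fun hx => h hx.1
                have h3 : ¬ (j ∈ nnrt b ∧ j ≠ KBS.origin k) := fun hx => h hx.1
                rw [if_neg h2, if_neg h3, if_neg h]
                omega
            have hstep2 : (∑ b : KBS k, 2 * (if j ∈ nnrt b then w b else 0))
                = (∑ b : KBS k, (if j ∈ nnrt b then w b else 0))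
                  + (∑ b : KBS k, (if KBS.neg j ∈ nnrt b then w b else 0)) := by
              rw [← hloadsym j, ← Finset.sum_add_distrib]
              apply Finset.sum_congr rfl
              intro b _
              omega
            have hstep3 : (∑ b : KBS k, (if j ∈ nnrt b then w b else 0))
                  + (∑ b : KBS k, (if KBS.neg j ∈ nnrt b then w b else 0))
                ≤ ∑ b : KBS k, (if b = KBS.origin k then 0 else w b) := by
              rw [← Finset.sum_add_distrib]
              apply Finset.sum_le_sum
              intro b _
              by_cases hb : b = KBS.origin k
              · subst hb
                have h1 : j ∉ nnrt (KBS.origin k) := by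
                  rw [nr_nnrt_origin]
                  simp only [List.mem_singleton]
                  exact hj
                have h2 : KBS.neg j ∉ nnrt (KBS.origin k) := by
                  rw [nr_nnrt_origin]
                  simp only [List.mem_singleton]
                  intro he
                  apply hj
                  rw [← hnegneg j, he, hnegO]
                rw [if_neg h1, if_neg h2, if_pos rfl]
              · rw [if_neg hb]
                by_cases h1 : j ∈ nnrt b
                · have h2 : KBS.neg j ∉ nnrt b := fun h2 =>
                    hj (nr_nnrt_antipodal h1 h2)
                  rw [if_pos h1, if_neg h2]
                  omega
                · rw [if_neg h1]
                  by_cases h2 : KBS.neg j ∈ nnrt b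
                  · rw [if_pos h2]
                    omega
                  · rw [if_neg h2]
                    omega
            exact le_trans
              (Nat.add_le_add_right
                (le_trans hstep1 (le_trans (le_of_eq hstep2) hstep3)) _)
              (le_of_eq hsum0)
        -- conclude the activity bound
        have hc1 : (w j : ℝ) * (B / Ra) ≤ W0 * (B / Ra) := by
          apply mul_le_mul_of_nonneg_right _ (by positivity)
          rw [hW0def]
          exact_mod_cast hmax j
        have hc2 : ((∑ b : KBS k, (w b) * ((if j ∈ nnrt b ∧ j ≠ b then 1 else 0)
              + (if j ∈ nnrt b ∧ j ≠ KBS.origin k then 1 else 0)) : ℕ) : ℝ)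
            * (B / R 1) ≤ (U' - W0) * (B / R 1) := by
          apply mul_le_mul_of_nonneg_right _ (by positivity)
          have := hND
          have hcast : ((∑ b : KBS k, (w b) * ((if j ∈ nnrt b ∧ j ≠ b then 1 else 0)
              + (if j ∈ nnrt b ∧ j ≠ KBS.origin k then 1 else 0)) : ℕ) : ℝ)
              + W0 ≤ U' := by
            rw [hW0def, hU'def]
            push_cast
            exact_mod_cast this
          linarith
        have hfin : W0 * (B / Ra) + (U' - W0) * (B / R 1) = 1 := by
          have h1 : W0 * (B / Ra) + (U' - W0) * (B / R 1) = B * S := by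
            rw [hSdef]
            ring
          rw [h1, hBdef, inv_mul_cancel₀ hS.ne']
        linarith [hc1, hc2]
    -- all end-to-end rates equal B
    have hval : ∀ (u : Users k w) (l : KLink k w), isHop (nnhr w) l u →
        linkRate R Ra l * τ l u = B := by
      intro u l hl
      cases l with
      | inl u' =>
        have he : u' = u := hl
        subst he
        have h1 : linkRate R Ra (Sum.inl u' : KLink k w) = Ra := rfl
        rw [h1, hτ_inl, if_pos rfl]
        field_simp
      | inr q =>
        have hq : q ∈ ((nnhr w).route u).zip ((nnhr w).route u).tail := hl
        have h1 : linkRate R Ra (Sum.inr q : KLink k w) = R (gdist q.1 q.2) := rfl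
        have h2 : gdist q.1 q.2 = 1 := nr_nnhr_unit w u hq
        rw [h1, h2, hτ_inr, if_pos hq]
        field_simp
    have he2e : ∀ u : Users k w, e2e R Ra (nnhr w) τ u = B := by
      intro u
      unfold e2e
      apply le_antisymm
      · have hm : (Sum.inl u : KLink k w) ∈ Finset.univ.filter
            (fun l : KLink k w => isHop (nnhr w) l u) :=
          Finset.mem_filter.2 ⟨Finset.mem_univ _, (rfl : u = u)⟩
        have := Finset.inf'_le (fun l => linkRate R Ra l * τ l u) hm
        rwa [hval u (Sum.inl u) (rfl : u = u)] at this
      · apply Finset.le_inf'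
        intro l hl
        exact (hval u l (Finset.mem_filter.1 hl).2).ge
    have hBeq : B = Finset.univ.inf'
        ⟨⟨KBS.origin k, ⟨0, hw0⟩⟩, Finset.mem_univ _⟩ (e2e R Ra (nnhr w) τ) := by
      apply le_antisymm
      · apply Finset.le_inf'
        intro u _
        exact (he2e u).ge
      · have := Finset.inf'_le (e2e R Ra (nnhr w) τ)
          (Finset.mem_univ (⟨KBS.origin k, ⟨0, hw0⟩⟩ : Users k w))
        exact this.trans (he2e _).le
    have hmem : B ∈ {θ : ℝ | ∃ τ' : KLink k w → Users k w → ℝ,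
        Feasible (nnhr w) τ' ∧ θ = Finset.univ.inf'
          ⟨⟨KBS.origin k, ⟨0, hw0⟩⟩, Finset.mem_univ _⟩ (e2e R Ra (nnhr w) τ')} :=
      ⟨τ, hfeas, hBeq⟩
    -- assemble
    refine ⟨nnhr w, ⟨?_, fun b m m' => rfl, ?_⟩, ?_⟩
    · -- NNHR route shape
      intro u
      have hmapval : ((nnhr w).route u).map (fun b => b.1) = rtL u.1.1 := by
        rw [hroute]
        exact nr_nnrt_val u.1
      refine ⟨?_, ?_, ?_⟩
      · by_cases h : u.1.1.2.natAbs ≤ u.1.1.1.natAbs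
        · left
          rw [hmapval, hwX_eq]
          unfold rtL
          rw [if_pos h]
        · right
          rw [hmapval, hwY_eq_swap]
          unfold rtL
          rw [if_neg h]
      · intro h
        rw [hmapval, hwX_eq]
        unfold rtL
        rw [if_pos (le_of_lt h)]
      · intro h
        rw [hmapval, hwY_eq_swap]
        unfold rtL
        rw [if_neg (not_le.2 h)]
    · -- load symmetry
      intro b
      rw [hloadsum, hloadsum]
      exact hloadsym b
    · -- the max-min value
      unfold maxmin
      apply le_antisymm
      · exact Real.sSup_le
          (fun θ hθ => nr_upper hw0 R Ra hRa hRpos hRanti (nnhr w) θ hθ) hB0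
      · exact le_csSup ⟨B, fun θ hθ =>
          nr_upper hw0 R Ra hRa hRpos hRanti (nnhr w) θ hθ⟩ hmem
end
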